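/- Let B be the backward shift on ℓ^p(ℕ, ω) with sup_n ω_n/ω_{n+1} < ∞. If there exist a bounded subset Γ of ℂ and a vector x ∈ ℓ^p(ℕ, ω) such that the projective-type orbit Orb(Γx, B) = {λ B^n x : λ ∈ Γ, n ∈ ℕ} has a non-zero norm limit point, then liminf_{n→∞} ω_n = 0 (i.e. B is hypercyclic). -/

import Mathlib

/-!
Evaluation at a coordinate is continuous on `ℓ^p(ℕ, ω)`, so `λ_k x_{j + n_k} → y_j ≠ 0` for
some `j`; as `Γ` is bounded, `|x_{j + n_k}|` stays bounded away from `0`. On the other hand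
`ω_m |x_m| → 0`, being the `p`-th root of the general term of the convergent series `‖x‖ᵖ`.
Hence `ω_{j + n_k} → 0`.
-/

open MeasureTheory Filter Topology
open scoped ENNReal

noncomputable section

/-- The weighted measure on the index set `I` giving the point `k` mass `(ω k) ^ p`,
so that `Lp ℂ p (wMeasure p ω)` is the weighted sequence space `ℓ^p(I, ω)`. -/
def wMeasure {I : Type*} [MeasurableSpace I] (p : ENNReal) (ω : I → ℝ) : Measure I :=
  Measure.sum (fun k => ENNReal.ofReal ((ω k) ^ p.toReal) • Measure.dirac k)

section WeightedLp

variable {I : Type*} [MeasurableSpace I] [MeasurableSingletonClass I] {p : ℝ≥0∞} {ω : I → ℝ}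

theorem wMeasure_singleton (k : I) : wMeasure p ω {k} = ENNReal.ofReal (ω k ^ p.toReal) := by
  rw [wMeasure, Measure.sum_apply _ (measurableSet_singleton k), tsum_eq_single k]
  · simp
  · intro i hi
    simp [hi]

theorem lintegral_wMeasure (f : I → ℝ≥0∞) :
    ∫⁻ k, f k ∂wMeasure p ω = ∑' k, ENNReal.ofReal (ω k ^ p.toReal) * f k := by
  simp [wMeasure, lintegral_sum_measure, lintegral_dirac]

theorem lintegral_enorm_rpow_wMeasure (hω : ∀ k, 0 ≤ ω k) (f : I → ℂ) :
    ∫⁻ k, ‖f k‖ₑ ^ p.toReal ∂wMeasure p ω = ∑' k, ENNReal.ofReal (ω k * ‖f k‖) ^ p.toReal := by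
  rw [lintegral_wMeasure]
  congr 1 with k
  rw [ENNReal.ofReal_mul (hω k), ENNReal.mul_rpow_of_nonneg _ _ ENNReal.toReal_nonneg,
    ENNReal.ofReal_rpow_of_nonneg (hω k) ENNReal.toReal_nonneg, ofReal_norm]

theorem apply_eq_of_ae_eq_wMeasure {k : I} (hk : 0 < ω k) {f g : I → ℂ}
    (h : f =ᵐ[wMeasure p ω] g) : f k = g k := by
  have hpos : wMeasure p ω {k} ≠ 0 := by
    rw [wMeasure_singleton]
    exact ENNReal.ofReal_pos.mpr (Real.rpow_pos_of_pos hk _) |>.ne'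
  by_contra hne
  exact hpos (measure_mono_null (Set.singleton_subset_iff.mpr hne) (ae_iff.mp h))

variable [Fact (1 ≤ p)]

theorem eLpNorm_wMeasure_rpow (hp : p ≠ ∞) (hω : ∀ k, 0 ≤ ω k) (f : I → ℂ) :
    eLpNorm f p (wMeasure p ω) ^ p.toReal = ∑' k, ENNReal.ofReal (ω k * ‖f k‖) ^ p.toReal := by
  have hp0 : p ≠ 0 := (zero_lt_one.trans_le Fact.out).ne'
  rw [eLpNorm_eq_lintegral_rpow_enorm_toReal hp0 hp, ← ENNReal.rpow_mul, one_div,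
    inv_mul_cancel₀ (ENNReal.toReal_pos hp0 hp).ne', ENNReal.rpow_one,
    lintegral_enorm_rpow_wMeasure hω]

theorem weight_mul_norm_apply_le_norm (hp : p ≠ ∞) (hω : ∀ k, 0 ≤ ω k)
    (f : Lp ℂ p (wMeasure p ω)) (k : I) : ω k * ‖f k‖ ≤ ‖f‖ := by
  have hp0 : p ≠ 0 := (zero_lt_one.trans_le Fact.out).ne'
  have hle : ENNReal.ofReal (ω k * ‖f k‖) ≤ eLpNorm f p (wMeasure p ω) := by
    rw [← ENNReal.rpow_le_rpow_iff (ENNReal.toReal_pos hp0 hp), eLpNorm_wMeasure_rpow hp hω]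
    exact ENNReal.le_tsum (f := fun k => ENNReal.ofReal (ω k * ‖f k‖) ^ p.toReal) k
  rw [Lp.norm_def, ← ENNReal.ofReal_le_iff_le_toReal (Lp.eLpNorm_ne_top f)]
  exact hle

theorem tendsto_weight_mul_norm_apply_cofinite (hp : p ≠ ∞) (hω : ∀ k, 0 ≤ ω k)
    (f : Lp ℂ p (wMeasure p ω)) : Tendsto (fun k => ω k * ‖f k‖) cofinite (𝓝 0) := by
  have hp0 : 0 < p.toReal := ENNReal.toReal_pos (zero_lt_one.trans_le Fact.out).ne' hp
  have hsum : ∑' k, ENNReal.ofReal (ω k * ‖f k‖) ^ p.toReal ≠ ∞ := by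
    rw [← eLpNorm_wMeasure_rpow hp hω]
    exact ENNReal.rpow_ne_top_of_nonneg ENNReal.toReal_nonneg (Lp.eLpNorm_ne_top f)
  have h : Tendsto (fun k => ENNReal.ofReal (ω k * ‖f k‖)) cofinite (𝓝 0) := by
    simpa [Function.comp_def, hp0.ne', ENNReal.zero_rpow_of_pos, hp0] using
      (ENNReal.continuous_rpow_const (y := p.toReal⁻¹)).tendsto 0 |>.comp
        (ENNReal.tendsto_cofinite_zero_of_tsum_ne_top hsum)
  refine ((ENNReal.tendsto_toReal ENNReal.zero_ne_top).comp h).congr fun k => ?_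
  exact ENNReal.toReal_ofReal (mul_nonneg (hω k) (norm_nonneg _))

/-- `f j` is the value of an arbitrary representative of the class `f`; it is well defined because
`j` is an atom of positive mass. -/
def wEvalCLM (hp : p ≠ ∞) (hω : ∀ k, 0 ≤ ω k) {j : I} (hj : 0 < ω j) :
    Lp ℂ p (wMeasure p ω) →L[ℂ] ℂ :=
  LinearMap.mkContinuous
    { toFun := fun f => f j
      map_add' := fun f g => apply_eq_of_ae_eq_wMeasure hj (Lp.coeFn_add f g)
      map_smul' := fun c f => apply_eq_of_ae_eq_wMeasure hj (Lp.coeFn_smul c f) }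
    (ω j)⁻¹ fun f => (le_inv_mul_iff₀ hj).mpr (weight_mul_norm_apply_le_norm hp hω f j)

@[simp]
theorem wEvalCLM_apply (hp : p ≠ ∞) (hω : ∀ k, 0 ≤ ω k) {j : I} (hj : 0 < ω j)
    (f : Lp ℂ p (wMeasure p ω)) : wEvalCLM hp hω hj f = f j :=
  rfl

end WeightedLp

theorem shift_pow_apply {p : ℝ≥0∞} [Fact (1 ≤ p)] {μ : Measure ℕ} {B : Lp ℂ p μ →L[ℂ] Lp ℂ p μ}
    (hB : ∀ x k, B x k = x (k + 1)) (m : ℕ) (x : Lp ℂ p μ) (k : ℕ) :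
    (B ^ m) x k = x (k + m) := by
  induction m generalizing x k with
  | zero => rfl
  | succ m ih => rw [pow_succ', mul_apply_eq_comp, hB, ih, add_right_comm, add_assoc]

theorem tendsto_zero_of_tendsto_mul_norm {𝕜 ι : Type*} [NormedDivisionRing 𝕜] {l : Filter ι}
    {w : ι → ℝ} {a lam : ι → 𝕜} {c : 𝕜} {M : ℝ} (hw : ∀ k, 0 ≤ w k) (hM : ∀ k, ‖lam k‖ ≤ M)
    (hwa : Tendsto (fun k => w k * ‖a k‖) l (𝓝 0)) (hc : Tendsto (fun k => lam k * a k) l (𝓝 c))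
    (hc0 : c ≠ 0) : Tendsto w l (𝓝 0) := by
  have hnorm : Tendsto (fun k => ‖lam k * a k‖) l (𝓝 ‖c‖) := hc.norm
  have hprod : Tendsto (fun k => w k * ‖lam k * a k‖) l (𝓝 0) := by
    refine squeeze_zero (fun k => mul_nonneg (hw k) (norm_nonneg _)) (fun k => ?_)
      (by simpa using hwa.const_mul M)
    calc w k * ‖lam k * a k‖ = ‖lam k‖ * (w k * ‖a k‖) := by rw [norm_mul]; ring
      _ ≤ M * (w k * ‖a k‖) :=
        mul_le_mul_of_nonneg_right (hM k) (mul_nonneg (hw k) (norm_nonneg _))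
  have hne : ∀ᶠ k in l, ‖lam k * a k‖ ≠ 0 := hnorm.eventually_ne (norm_ne_zero_iff.mpr hc0)
  simpa using (hprod.div hnorm (norm_ne_zero_iff.mpr hc0)).congr' <|
    hne.mono fun k hk => mul_div_cancel_right₀ (w k) hk

theorem liminf_eq_zero_of_tendsto_comp {u : ℕ → ℝ} {m : ℕ → ℕ} (hu : ∀ k, 0 ≤ u k)
    (hm : Tendsto m atTop atTop) (hum : Tendsto (u ∘ m) atTop (𝓝 0)) : liminf u atTop = 0 := by
  have hbdd : IsBoundedUnder (· ≥ ·) atTop u := isBoundedUnder_of_eventually_ge (.of_forall hu)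
  refine le_antisymm ?_ ?_
  · calc liminf u atTop ≤ liminf (u ∘ m) atTop :=
          hm.liminf_le_liminf_comp (by simpa [IsCoboundedUnder, map_map] using
            hum.isCoboundedUnder_ge) hbdd
      _ = 0 := hum.liminf_eq
  · have hfreq : ∃ᶠ k in atTop, u k ≤ 1 :=
      hm.frequently (hum.eventually (eventually_le_nhds one_pos)).frequently
    exact le_liminf_of_le (.of_frequently_le hfreq) (.of_forall hu)

theorem stmt7_general (p : ENNReal) [Fact (1 ≤ p)] (hp : p ≠ ∞) (ω : ℕ → ℝ) (hω : ∀ k, 0 < ω k)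
    (B : Lp ℂ p (wMeasure p ω) →L[ℂ] Lp ℂ p (wMeasure p ω))
    (hB : ∀ (x : Lp ℂ p (wMeasure p ω)) (k : ℕ), B x k = x (k + 1))
    (Γ : Set ℂ) (hΓ : Bornology.IsBounded Γ)
    (x : Lp ℂ p (wMeasure p ω))
    (lam : ℕ → ℂ) (hlam : ∀ k, lam k ∈ Γ)
    (n : ℕ → ℕ) (hn : StrictMono n)
    (y : Lp ℂ p (wMeasure p ω)) (hy : y ≠ 0)
    (hconv : Tendsto (fun k => lam k • (B ^ n k) x) atTop (nhds y)) :
    Filter.liminf ω Filter.atTop = 0 := by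
  have hω0 : ∀ k, 0 ≤ ω k := fun k => (hω k).le
  obtain ⟨j, hj⟩ : ∃ j, y j ≠ 0 := by
    by_contra! h
    exact hy (Lp.eq_zero_iff_ae_eq_zero.mpr (.of_forall h))
  obtain ⟨M, hM⟩ := isBounded_iff_forall_norm_le.mp hΓ
  have hm : Tendsto (fun k => j + n k) atTop atTop :=
    tendsto_atTop_mono (fun k => Nat.le_add_left _ _) hn.tendsto_atTop
  have hcoord : Tendsto (fun k => lam k * x (j + n k)) atTop (𝓝 (y j)) := by
    simpa only [Function.comp_def, map_smul, wEvalCLM_apply, shift_pow_apply hB, smul_eq_mul] using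
      ((wEvalCLM hp hω0 (hω j)).continuous.tendsto y).comp hconv
  have hdecay : Tendsto (fun k => ω (j + n k) * ‖x (j + n k)‖) atTop (𝓝 0) :=
    (tendsto_weight_mul_norm_apply_cofinite hp hω0 x).comp (Nat.cofinite_eq_atTop ▸ hm)
  exact liminf_eq_zero_of_tendsto_comp hω0 hm <|
    tendsto_zero_of_tendsto_mul_norm (fun k => hω0 _) (fun k => hM _ (hlam k)) hdecay hcoord hj

theorem stmt7 (p : ENNReal) [Fact (1 ≤ p)] (hp : p ≠ ∞) (ω : ℕ → ℝ) (hω : ∀ k, 0 < ω k)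
    (hbdd : ∃ C : ℝ, ∀ n, ω n / ω (n + 1) ≤ C)
    (B : Lp ℂ p (wMeasure p ω) →L[ℂ] Lp ℂ p (wMeasure p ω))
    (hB : ∀ (x : Lp ℂ p (wMeasure p ω)) (k : ℕ), B x k = x (k + 1))
    (Γ : Set ℂ) (hΓ : Bornology.IsBounded Γ)
    (x : Lp ℂ p (wMeasure p ω))
    (lam : ℕ → ℂ) (hlam : ∀ k, lam k ∈ Γ)
    (n : ℕ → ℕ) (hn : StrictMono n)
    (y : Lp ℂ p (wMeasure p ω)) (hy : y ≠ 0)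
    (hconv : Tendsto (fun k => lam k • (B ^ n k) x) atTop (nhds y)) :
    Filter.liminf ω Filter.atTop = 0 :=
  stmt7_general p hp ω hω B hB Γ hΓ x lam hlam n hn y hy hconv
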